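/- arXiv:2408.09937 — 3 statements merged into one kernel-verified Lean document; each statement's English description precedes it below -/
import Mathlib

section
/- Let d ≥ 2 and let μ be the Haar probability measure on the unitary group U(d). Then for all A, B, C, D ∈ M_d(ℂ), ∫_{U(d)} Tr[W A W† B]·Tr[W C W† D] dμ(W) = (1/(d²−1))·(Tr[AC]·Tr[BD] + Tr[A]·Tr[B]·Tr[C]·Tr[D]) − (1/(d(d²−1)))·(Tr[A]·Tr[C]·Tr[BD] + Tr[AC]·Tr[B]·Tr[D]). -/
open MeasureTheory Matrix

/-- The space of `m × n` complex matrices carries the (product) measurable structure. -/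
noncomputable instance {m n : Type*} : MeasurableSpace (Matrix m n ℂ) :=
  (inferInstance : MeasurableSpace (m → n → ℂ))

/-!
Writing `Tr[W A W† B] · Tr[W C W† D] = Tr[(W ⊗ W) (A ⊗ C) (W ⊗ W)† (B ⊗ D)]`, the integral is
`Tr[Φ (B ⊗ D)]` for the twirl `Φ = ∫ (W ⊗ W) (A ⊗ C) (W ⊗ W)† dμ(W)`. By invariance of `μ`, `Φ`
commutes with every `V ⊗ V`, and the commutant of `{V ⊗ V}` is spanned by `1` and the swap `F`:
diagonal unitaries kill every entry `Φ (i, j) (k, l)` with `{i, j} ≠ {k, l}`, permutation matrices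
make the surviving off-diagonal entries constant, and a single non-monomial unitary ties the
diagonal entries to them. The two coefficients of `Φ = a 1 + b F` are then read off from
`Tr Φ = Tr A Tr C` and `Tr (Φ F) = Tr (A C)`.
-/

open scoped Kronecker Matrix.Norms.L2Operator

instance {m n : Type*} [Countable m] [Countable n] : BorelSpace (Matrix m n ℂ) :=
  inferInstanceAs (BorelSpace (m → n → ℂ))

theorem natCast_sq_sub_one_ne_zero {R : Type*} [Ring R] [CharZero R] {N : ℕ} (hN : 1 < N) :
    (N : R) ^ 2 - 1 ≠ 0 := by
  rw [sub_ne_zero]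
  exact_mod_cast (Nat.one_lt_pow two_ne_zero hN).ne'

theorem Equiv.Perm.exists_apply_eq_and_apply_eq {α : Type*} [DecidableEq α] {i j k l : α}
    (hij : i ≠ j) (hkl : k ≠ l) : ∃ σ : Equiv.Perm α, σ i = k ∧ σ j = l := by
  have hj : Equiv.swap i k j ≠ k := by
    simpa using (Equiv.swap i k).injective.ne hij.symm
  refine ⟨Equiv.swap (Equiv.swap i k j) l * Equiv.swap i k, ?_, ?_⟩
  · simp [Equiv.swap_apply_of_ne_of_ne hj.symm hkl]
  · simp

namespace Matrix

variable {n : Type*} [DecidableEq n]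

variable (n) in
def swapMatrix : Matrix (n × n) (n × n) ℂ :=
  Equiv.Perm.permMatrix ℂ (Equiv.prodComm n n)

theorem swapMatrix_apply (i j k l : n) :
    swapMatrix n (i, j) (k, l) = if i = l ∧ j = k then 1 else 0 := by
  simp [swapMatrix, PEquiv.toMatrix_apply, Prod.ext_iff, and_comm]

theorem permMatrix_kronecker_permMatrix (σ τ : Equiv.Perm n) :
    σ.permMatrix ℂ ⊗ₖ τ.permMatrix ℂ = Equiv.Perm.permMatrix ℂ (σ.prodCongr τ) := by
  ext ⟨i, j⟩ ⟨k, l⟩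
  simp [PEquiv.toMatrix_apply, ← ite_and, and_comm]

variable [Fintype n]

theorem swapMatrix_mul_kronecker (A B : Matrix n n ℂ) :
    swapMatrix n * (A ⊗ₖ B) = (B ⊗ₖ A) * swapMatrix n := by
  rw [swapMatrix, PEquiv.toMatrix_toPEquiv_mul, PEquiv.mul_toMatrix_toPEquiv]
  ext ⟨i, j⟩ ⟨k, l⟩
  simp [mul_comm]

theorem commute_kronecker_self_swapMatrix (A : Matrix n n ℂ) :
    Commute (A ⊗ₖ A) (swapMatrix n) :=
  (swapMatrix_mul_kronecker A A).symm

theorem swapMatrix_mul_self : swapMatrix n * swapMatrix n = 1 := by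
  rw [swapMatrix, PEquiv.toMatrix_toPEquiv_mul]
  ext ⟨i, j⟩ ⟨k, l⟩
  simp [PEquiv.toMatrix_apply, one_apply, Prod.ext_iff]

theorem trace_swapMatrix_mul_kronecker (A B : Matrix n n ℂ) :
    (swapMatrix n * (A ⊗ₖ B)).trace = (A * B).trace := by
  rw [swapMatrix, PEquiv.toMatrix_toPEquiv_mul]
  simp only [trace, diag, submatrix_apply, Fintype.sum_prod_type, mul_apply, kroneckerMap_apply,
    Equiv.prodComm_apply, Prod.fst_swap, Prod.snd_swap, id]
  exact Finset.sum_comm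

theorem trace_swapMatrix : (swapMatrix n).trace = Fintype.card n := by
  simpa using trace_swapMatrix_mul_kronecker (1 : Matrix n n ℂ) 1

theorem permMatrix_mem_unitaryGroup (σ : Equiv.Perm n) :
    σ.permMatrix ℂ ∈ unitaryGroup n ℂ := by
  rw [mem_unitaryGroup_iff, star_eq_conjTranspose, conjTranspose_permMatrix, ← permMatrix_mul]
  simp

theorem diagonal_mem_unitaryGroup {z : n → ℂ} (hz : ∀ i, star (z i) * z i = 1) :
    diagonal z ∈ unitaryGroup n ℂ := by
  rw [mem_unitaryGroup_iff', star_eq_conjTranspose, diagonal_conjTranspose, diagonal_mul_diagonal]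
  simp only [Pi.star_apply, hz, diagonal_one]

theorem one_sub_two_smul_vecMulVec_mem_unitaryGroup {u : n → ℂ} (hu : star u ⬝ᵥ u = 1) :
    1 - (2 : ℂ) • vecMulVec u (star u) ∈ unitaryGroup n ℂ := by
  have hP : vecMulVec u (star u) * vecMulVec u (star u) = vecMulVec u (star u) := by
    rw [vecMulVec_mul_vecMulVec, hu, one_smul]
  have hH : star (1 - (2 : ℂ) • vecMulVec u (star u)) = 1 - (2 : ℂ) • vecMulVec u (star u) := by
    simp [star_eq_conjTranspose, conjTranspose_vecMulVec]
  rw [mem_unitaryGroup_iff, hH, sub_mul, mul_sub, mul_sub, smul_mul_smul_comm, hP]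
  simp only [mul_one, one_mul]
  module

theorem exists_mem_unitaryGroup_apply_ne_zero {i j : n} (hij : i ≠ j) :
    ∃ V ∈ unitaryGroup n ℂ, V i i ≠ 0 ∧ V i j ≠ 0 := by
  set u : n → ℂ := Pi.single i (3 / 5) + Pi.single j (4 / 5)
  have hu : star u ⬝ᵥ u = 1 := by
    norm_num [u, dotProduct, Pi.single_apply, Finset.sum_add_distrib, add_mul, mul_add, hij,
      hij.symm, map_div₀, map_ofNat]
  refine ⟨_, one_sub_two_smul_vecMulVec_mem_unitaryGroup hu, ?_, ?_⟩ <;>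
    norm_num [u, hij, hij.symm, vecMulVec_apply]

section Commutant

variable {T : Matrix (n × n) (n × n) ℂ}

theorem apply_eq_zero_of_commute_diagonal_kronecker {z : n → ℂ}
    (hT : Commute (diagonal z ⊗ₖ diagonal z) T) {i j k l : n} (h : z i * z j ≠ z k * z l) :
    T (i, j) (k, l) = 0 := by
  have hent := congr_fun₂ hT.eq (i, j) (k, l)
  rw [diagonal_kronecker_diagonal, diagonal_mul, mul_diagonal] at hent
  have : (z i * z j - z k * z l) * T (i, j) (k, l) = 0 := by linear_combination hent
  exact (mul_eq_zero.mp this).resolve_left (sub_ne_zero.mpr h)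

theorem apply_prodCongr_eq_of_commute (σ : Equiv.Perm n)
    (hT : Commute (σ.permMatrix ℂ ⊗ₖ σ.permMatrix ℂ) T) (p q : n × n) :
    T (σ.prodCongr σ p) (σ.prodCongr σ q) = T p q := by
  have hent := congr_fun₂ hT.eq p (σ.prodCongr σ q)
  rwa [permMatrix_kronecker_permMatrix, PEquiv.toMatrix_toPEquiv_mul,
    PEquiv.mul_toMatrix_toPEquiv, submatrix_apply, submatrix_apply, id, id,
    Equiv.symm_apply_apply] at hent

variable (hT : ∀ U ∈ unitaryGroup n ℂ, Commute (U ⊗ₖ U) T)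
include hT

theorem apply_eq_zero_of_commute_kronecker_self {i j k l : n}
    (h : ({i, j} : Set n) ≠ {k, l}) : T (i, j) (k, l) = 0 := by
  obtain ⟨m, hm⟩ := Set.symmDiff_nonempty.mpr h
  set z : n → ℂ := fun x => if x = m then Complex.I else 1
  have hz : ∀ x, star (z x) * z x = 1 := fun x => by
    by_cases hx : x = m <;> simp [z, hx]
  -- `z a * z b` is `I ^ #{m in [a, b]}`, so it is `1` exactly when `m ∉ {a, b}`
  have key : ∀ a b c e : n, m ∈ ({a, b} : Set n) → m ∉ ({c, e} : Set n) →
      z a * z b ≠ z c * z e := by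
    intro a b c e hin hout
    simp only [Set.mem_insert_iff, Set.mem_singleton_iff, not_or] at hin hout
    have : z c * z e = 1 := by simp [z, Ne.symm hout.1, Ne.symm hout.2]
    rw [this]
    rcases hin with rfl | rfl <;> simp only [z] <;> split_ifs <;> norm_num [Complex.ext_iff]
  refine apply_eq_zero_of_commute_diagonal_kronecker (hT _ (diagonal_mem_unitaryGroup hz)) ?_
  rcases hm with ⟨hin, hout⟩ | ⟨hin, hout⟩
  · exact key _ _ _ _ hin hout
  · exact (key _ _ _ _ hin hout).symm

theorem apply_perm_eq_of_commute_kronecker_self (σ : Equiv.Perm n) (i j k l : n) :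
    T (σ i, σ j) (σ k, σ l) = T (i, j) (k, l) :=
  apply_prodCongr_eq_of_commute σ (hT _ (permMatrix_mem_unitaryGroup σ)) (i, j) (k, l)

theorem apply_diag_eq_add_of_commute_kronecker_self {i j : n} (hij : i ≠ j) :
    T (i, i) (i, i) = T (i, j) (i, j) + T (j, i) (i, j) := by
  obtain ⟨V, hV, hVii, hVij⟩ := exists_mem_unitaryGroup_apply_ne_zero hij
  -- by the support lemma only three entries of `T` survive in this entry of `(V ⊗ V) T = T (V ⊗ V)`
  have hent := congr_fun₂ (hT V hV).eq (i, i) (i, j)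
  rw [mul_apply, mul_apply, Fintype.sum_eq_add (i, j) (j, i) (by simp [hij]),
    Fintype.sum_eq_single (i, i)] at hent
  · simp only [kroneckerMap_apply] at hent
    apply mul_right_cancel₀ (mul_ne_zero hVii hVij)
    linear_combination -hent
  · intro r hr
    rw [apply_eq_zero_of_commute_kronecker_self hT, zero_mul]
    rw [Ne, Set.pair_eq_pair_iff]
    rintro (⟨h1, h2⟩ | ⟨h1, h2⟩)
    · exact hr (Prod.ext h1.symm h2.symm)
    · exact hr (Prod.ext h2.symm h1.symm)
  · rintro r ⟨hr1, hr2⟩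
    rw [apply_eq_zero_of_commute_kronecker_self hT, mul_zero]
    rw [Ne, Set.pair_eq_pair_iff]
    rintro (⟨h1, h2⟩ | ⟨h1, h2⟩)
    · exact hr1 (Prod.ext h1 h2)
    · exact hr2 (Prod.ext h1 h2)

theorem exists_eq_smul_one_add_smul_swapMatrix_of_commute [Nontrivial n] :
    ∃ a b : ℂ, T = a • 1 + b • swapMatrix n := by
  obtain ⟨i₀, j₀, h₀⟩ := exists_pair_ne n
  set a := T (i₀, j₀) (i₀, j₀)
  set b := T (j₀, i₀) (i₀, j₀)
  have hoff : ∀ {i j : n}, i ≠ j → T (i, j) (i, j) = a ∧ T (j, i) (i, j) = b := by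
    intro i j hij
    obtain ⟨σ, rfl, rfl⟩ := Equiv.Perm.exists_apply_eq_and_apply_eq h₀ hij
    exact ⟨apply_perm_eq_of_commute_kronecker_self hT ..,
      apply_perm_eq_of_commute_kronecker_self hT ..⟩
  have hdiag : ∀ i, T (i, i) (i, i) = a + b := fun i => by
    obtain ⟨j, hji⟩ := exists_ne i
    rw [apply_diag_eq_add_of_commute_kronecker_self hT hji.symm, (hoff hji.symm).1,
      (hoff hji.symm).2]
  refine ⟨a, b, ?_⟩
  ext ⟨i, j⟩ ⟨k, l⟩
  simp only [add_apply, smul_apply, smul_eq_mul, one_apply, Prod.mk.injEq, swapMatrix_apply]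
  by_cases hs : ({i, j} : Set n) = {k, l}
  · rcases Set.pair_eq_pair_iff.mp hs with ⟨rfl, rfl⟩ | ⟨rfl, rfl⟩ <;>
      obtain rfl | hij := eq_or_ne i j
    · simp [hdiag]
    · simp [hij, hij.symm, (hoff hij).1]
    · simp [hdiag]
    · simp [hij, hij.symm, (hoff hij.symm).2]
  · rw [apply_eq_zero_of_commute_kronecker_self hT hs]
    rw [Set.pair_eq_pair_iff, not_or] at hs
    simp [hs.1, hs.2]

end Commutant

section Twirl

variable {G : Type*} [Group G] [TopologicalSpace G] [MeasurableSpace G]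
  (μ : Measure G) (ρ : G →* unitaryGroup n ℂ)

noncomputable def twirl (X : Matrix n n ℂ) : Matrix n n ℂ :=
  ∫ g, (ρ g : Matrix n n ℂ) * X * (ρ g : Matrix n n ℂ)ᴴ ∂μ

variable {μ ρ} [IsFiniteMeasure μ] [OpensMeasurableSpace G] (hρ : Continuous ρ)
include hρ

theorem integrable_conj_conjTranspose (X : Matrix n n ℂ) :
    Integrable (fun g => (ρ g : Matrix n n ℂ) * X * (ρ g : Matrix n n ℂ)ᴴ) μ := by
  have hc : Continuous fun g => (ρ g : Matrix n n ℂ) := continuous_subtype_val.comp hρ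
  refine Integrable.of_bound ((hc.matrix_mul continuous_const).matrix_mul
    hc.matrix_conjTranspose).aestronglyMeasurable ‖X‖ (ae_of_all _ fun g => le_of_eq ?_)
  rw [← star_eq_conjTranspose, ← Unitary.coe_star, CStarRing.norm_mul_coe_unitary,
    CStarRing.norm_coe_unitary_mul]

theorem trace_twirl_mul (X Y : Matrix n n ℂ) :
    (twirl μ ρ X * Y).trace =
      ∫ g, ((ρ g : Matrix n n ℂ) * X * (ρ g : Matrix n n ℂ)ᴴ * Y).trace ∂μ := by
  rw [twirl, ← integral_mul_const_of_integrable (integrable_conj_conjTranspose hρ X)]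
  exact (ContinuousLinearMap.integral_comp_comm
    (LinearMap.toContinuousLinearMap (traceLinearMap n ℂ ℂ))
    ((integrable_conj_conjTranspose hρ X).mul_const Y)).symm

theorem trace_twirl_mul_of_commute [IsProbabilityMeasure μ] {Y : Matrix n n ℂ}
    (hY : ∀ g, Commute (ρ g : Matrix n n ℂ) Y) (X : Matrix n n ℂ) :
    (twirl μ ρ X * Y).trace = (X * Y).trace := by
  have h : ∀ g, ((ρ g : Matrix n n ℂ) * X * (ρ g : Matrix n n ℂ)ᴴ * Y).trace = (X * Y).trace := by
    intro g
    have hYg : (ρ g : Matrix n n ℂ)ᴴ * Y * ρ g = Y := by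
      rw [mul_assoc, ← (hY g).eq, ← mul_assoc, ← star_eq_conjTranspose,
        Unitary.star_mul_self_of_mem (ρ g).2, one_mul]
    rw [mul_assoc, mul_assoc, trace_mul_comm, mul_assoc, hYg]
  simp [trace_twirl_mul hρ, h]

variable [MeasurableMul G] [μ.IsMulLeftInvariant]

theorem conj_twirl (g : G) (X : Matrix n n ℂ) :
    (ρ g : Matrix n n ℂ) * twirl μ ρ X * (ρ g : Matrix n n ℂ)ᴴ = twirl μ ρ X := by
  rw [twirl, ← integral_const_mul_of_integrable (integrable_conj_conjTranspose hρ X),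
    ← integral_mul_const_of_integrable ((integrable_conj_conjTranspose hρ X).const_mul _)]
  have hmul : ∀ h, (ρ g : Matrix n n ℂ) * ((ρ h : Matrix n n ℂ) * X * (ρ h : Matrix n n ℂ)ᴴ) *
      (ρ g : Matrix n n ℂ)ᴴ = (ρ (g * h) : Matrix n n ℂ) * X * (ρ (g * h) : Matrix n n ℂ)ᴴ := by
    simp [conjTranspose_mul, mul_assoc]
  simp_rw [hmul]
  exact integral_mul_left_eq_self (fun h => (ρ h : Matrix n n ℂ) * X * (ρ h : Matrix n n ℂ)ᴴ) g

theorem commute_twirl (g : G) (X : Matrix n n ℂ) :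
    Commute (ρ g : Matrix n n ℂ) (twirl μ ρ X) := by
  have hU : (ρ g : Matrix n n ℂ)ᴴ * ρ g = 1 := Unitary.star_mul_self_of_mem (ρ g).2
  calc (ρ g : Matrix n n ℂ) * twirl μ ρ X
      = (ρ g : Matrix n n ℂ) * twirl μ ρ X * (ρ g : Matrix n n ℂ)ᴴ * ρ g := by
        rw [mul_assoc _ _ (ρ g : Matrix n n ℂ), hU, mul_one]
    _ = twirl μ ρ X * ρ g := by rw [conj_twirl hρ]

end Twirl

namespace UnitaryGroup

variable {α : Type*} [CommRing α] [StarRing α]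

def tensorSquare : unitaryGroup n α →* unitaryGroup (n × n) α where
  toFun U := ⟨(U : Matrix n n α) ⊗ₖ (U : Matrix n n α), kronecker_mem_unitary U.2 U.2⟩
  map_one' := Subtype.ext one_kronecker_one
  map_mul' _ _ := Subtype.ext (mul_kronecker_mul _ _ _ _)

@[simp]
theorem coe_tensorSquare (U : unitaryGroup n α) :
    (tensorSquare U : Matrix (n × n) (n × n) α) = (U : Matrix n n α) ⊗ₖ (U : Matrix n n α) :=
  rfl

theorem continuous_tensorSquare : Continuous (tensorSquare : unitaryGroup n ℂ →* _) := by
  refine Continuous.subtype_mk (continuous_matrix fun p q => ?_) _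
  exact (continuous_subtype_val.matrix_elem _ _).mul (continuous_subtype_val.matrix_elem _ _)

end UnitaryGroup

open UnitaryGroup in
theorem twirl_tensorSquare_kronecker [Nontrivial n]
    (μ : Measure (unitaryGroup n ℂ)) [IsProbabilityMeasure μ] [μ.IsMulLeftInvariant]
    (A C : Matrix n n ℂ) :
    twirl μ tensorSquare (A ⊗ₖ C) =
      ((Fintype.card n * (A.trace * C.trace) - (A * C).trace) /
          (Fintype.card n * ((Fintype.card n : ℂ) ^ 2 - 1))) • 1 +
        ((Fintype.card n * (A * C).trace - A.trace * C.trace) /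
          (Fintype.card n * ((Fintype.card n : ℂ) ^ 2 - 1))) • swapMatrix n := by
  obtain ⟨a, b, hab⟩ := exists_eq_smul_one_add_smul_swapMatrix_of_commute
    fun U hU => commute_twirl (μ := μ) continuous_tensorSquare ⟨U, hU⟩ (A ⊗ₖ C)
  have h1 := trace_twirl_mul_of_commute continuous_tensorSquare (μ := μ)
    (fun U => Commute.one_right _) (A ⊗ₖ C)
  have h2 := trace_twirl_mul_of_commute continuous_tensorSquare (μ := μ)
    (fun U => commute_kronecker_self_swapMatrix _) (A ⊗ₖ C)
  rw [hab] at h1 h2 ⊢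
  rw [trace_mul_comm (A ⊗ₖ C), trace_swapMatrix_mul_kronecker] at h2
  simp only [add_mul, smul_mul, one_mul, mul_one, swapMatrix_mul_self, trace_add, trace_smul,
    trace_one, trace_swapMatrix, trace_kronecker, smul_eq_mul, Fintype.card_prod, Nat.cast_mul]
    at h1 h2
  have hN : (Fintype.card n : ℂ) ≠ 0 := by simp
  have hN2 := natCast_sq_sub_one_ne_zero (R := ℂ) (Fintype.one_lt_card (α := n))
  have ha : a = (Fintype.card n * (A.trace * C.trace) - (A * C).trace) /
      (Fintype.card n * ((Fintype.card n : ℂ) ^ 2 - 1)) := by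
    field_simp
    linear_combination (Fintype.card n : ℂ) * h1 - h2
  have hb : b = (Fintype.card n * (A * C).trace - A.trace * C.trace) /
      (Fintype.card n * ((Fintype.card n : ℂ) ^ 2 - 1)) := by
    field_simp
    linear_combination (Fintype.card n : ℂ) * h2 - h1
  rw [ha, hb]

end Matrix

/-- **Second moment of Haar-random conjugation.**
Let `d ≥ 2` and let `μ` be the Haar probability measure on the unitary group `U(d)`.
Then for all `A B C D ∈ M_d(ℂ)`,
`∫ Tr[W A W† B]·Tr[W C W† D] dμ(W)
  = (1/(d²−1))·(Tr[AC]·Tr[BD] + Tr[A]·Tr[B]·Tr[C]·Tr[D])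
    − (1/(d(d²−1)))·(Tr[A]·Tr[C]·Tr[BD] + Tr[AC]·Tr[B]·Tr[D])`. -/
theorem haar_integral_trace_conj_sq (d : ℕ) (hd : 2 ≤ d)
    (μ : Measure (Matrix.unitaryGroup (Fin d) ℂ))
    [μ.IsHaarMeasure] [IsProbabilityMeasure μ]
    (A B C D : Matrix (Fin d) (Fin d) ℂ) :
    ∫ W : Matrix.unitaryGroup (Fin d) ℂ,
        ((W : Matrix (Fin d) (Fin d) ℂ) * A * (W : Matrix (Fin d) (Fin d) ℂ)ᴴ * B).trace *
        ((W : Matrix (Fin d) (Fin d) ℂ) * C * (W : Matrix (Fin d) (Fin d) ℂ)ᴴ * D).trace ∂μ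
      = (1 / ((d : ℂ) ^ 2 - 1)) *
          ((A * C).trace * (B * D).trace + A.trace * B.trace * C.trace * D.trace)
        - (1 / ((d : ℂ) * ((d : ℂ) ^ 2 - 1))) *
          (A.trace * C.trace * (B * D).trace + (A * C).trace * B.trace * D.trace) := by
  have : Nontrivial (Fin d) := Fin.nontrivial_iff_two_le.mpr hd
  calc _ = ∫ W : Matrix.unitaryGroup (Fin d) ℂ, ((UnitaryGroup.tensorSquare W : Matrix _ _ ℂ) *
          (A ⊗ₖ C) * (UnitaryGroup.tensorSquare W : Matrix _ _ ℂ)ᴴ * (B ⊗ₖ D)).trace ∂μ := by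
        simp only [UnitaryGroup.coe_tensorSquare, conjTranspose_kronecker, ← mul_kronecker_mul,
          trace_kronecker]
    _ = (twirl μ UnitaryGroup.tensorSquare (A ⊗ₖ C) * (B ⊗ₖ D)).trace :=
        (trace_twirl_mul UnitaryGroup.continuous_tensorSquare _ _).symm
    _ = _ := by
      rw [twirl_tensorSquare_kronecker, add_mul, smul_mul, smul_mul, one_mul, trace_add,
        trace_smul, trace_smul, trace_kronecker, trace_swapMatrix_mul_kronecker,
        Fintype.card_fin, smul_eq_mul, smul_eq_mul]
      have hd₀ : (d : ℂ) ≠ 0 := Nat.cast_ne_zero.mpr (by omega)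
      have hd₁ := natCast_sq_sub_one_ne_zero (R := ℂ) hd
      field_simp
      ring
end

section
/- Let S ≥ 1 and o ∈ ℝ^S. For k = 1,…,S define C_k := I₂^{⊗(k−1)} ⊗ J ⊗ I₂^{⊗(S−k)} ∈ M_{2^S}(ℝ), where J = [[0,−1],[1,0]]. Then the real symmetric matrix M := Σ_{k=1}^S Σ_{k'=1}^S o_k·o_{k'}·C_k·C_{k'}ᵀ is positive semidefinite, and every eigenvalue λ of M satisfies min_{g ∈ {−1,1}^S} (gᵀo)² ≤ λ ≤ (Σ_{k=1}^S |o_k|)². -/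
open Matrix

/-- The matrix `C_k = I₂^{⊗(k−1)} ⊗ J ⊗ I₂^{⊗(S−k)}` on `(ℝ²)^{⊗S}` (whose index set is
realized as `Fin S → Fin 2`), where `J = [[0,−1],[1,0]]` sits in the `k`-th tensor
factor. -/
def rotFactor (S : ℕ) (k : Fin S) : Matrix (Fin S → Fin 2) (Fin S → Fin 2) ℝ :=
  Matrix.of fun v w =>
    (!![0, -1; 1, 0] : Matrix (Fin 2) (Fin 2) ℝ) (v k) (w k) *
      ∏ n ∈ Finset.univ.erase k, (if v n = w n then (1 : ℝ) else 0)

namespace RotAux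

open Complex Finset

lemma fin2 (a : Fin 2) : a = 0 ∨ a = 1 := by fin_cases a <;> simp

/-- sign of a boolean -/
def sgn (b : Bool) : ℝ := if b then 1 else -1

/-- single-site eigenvector factor -/
noncomputable def fct (b : Bool) (a : Fin 2) : ℂ :=
  if a = 0 then 1 else if b then Complex.I else -Complex.I

/-- complex eigenvector indexed by a sign pattern -/
noncomputable def uvec (S : ℕ) (b : Fin S → Bool) : (Fin S → Fin 2) → ℂ :=
  fun v => ∏ k, fct (b k) (v k)

/-- complexified rotFactor -/
noncomputable def rotC (S : ℕ) (k : Fin S) :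
    Matrix (Fin S → Fin 2) (Fin S → Fin 2) ℂ :=
  (rotFactor S k).map Complex.ofReal

variable {S : ℕ}

lemma rotC_apply (k : Fin S) (v w : Fin S → Fin 2) :
    rotC S k v w = (!![0, -1; 1, 0] : Matrix (Fin 2) (Fin 2) ℂ) (v k) (w k) *
      ∏ n ∈ Finset.univ.erase k, (if v n = w n then (1 : ℂ) else 0) := by
  have key : ∀ a b : Fin 2,
      (((!![0, -1; 1, 0] : Matrix (Fin 2) (Fin 2) ℝ) a b : ℝ) : ℂ)
        = (!![0, -1; 1, 0] : Matrix (Fin 2) (Fin 2) ℂ) a b := by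
    intro a b; fin_cases a <;> fin_cases b <;> simp
  simp only [rotC, Matrix.map_apply, rotFactor, Matrix.of_apply]
  push_cast [apply_ite (Complex.ofReal)]
  congr 1
  exact key (v k) (w k)

lemma rotFactor_transpose (k : Fin S) : (rotFactor S k)ᵀ = -(rotFactor S k) := by
  ext v w
  have key : ∀ a b : Fin 2, (!![0, -1; 1, 0] : Matrix (Fin 2) (Fin 2) ℝ) a b
      = -(!![0, -1; 1, 0] : Matrix (Fin 2) (Fin 2) ℝ) b a := by
    intro a b; fin_cases a <;> fin_cases b <;> norm_num
  simp only [Matrix.of_apply] at key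
  have h2 : ∏ n ∈ Finset.univ.erase k, (if w n = v n then (1 : ℝ) else 0)
      = ∏ n ∈ Finset.univ.erase k, (if v n = w n then (1 : ℝ) else 0) := by
    refine Finset.prod_congr rfl fun n _ => ?_
    simp [eq_comm]
  simp only [Matrix.transpose_apply, rotFactor, Matrix.of_apply, Matrix.neg_apply]
  rw [key (w k) (v k), h2]
  ring

lemma rotC_transpose (k : Fin S) : (rotC S k)ᵀ = -(rotC S k) := by
  ext v w
  have h := congrFun (congrFun (rotFactor_transpose (S := S) k) v) w
  simp only [Matrix.transpose_apply, Matrix.neg_apply] at h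
  simp only [rotC, Matrix.transpose_apply, Matrix.map_apply, Matrix.neg_apply, h]
  push_cast
  ring

lemma uvec_split (b : Fin S → Bool) (k : Fin S) (v : Fin S → Fin 2) :
    uvec S b v = fct (b k) (v k) * ∏ n ∈ Finset.univ.erase k, fct (b n) (v n) :=
  (Finset.mul_prod_erase Finset.univ _ (Finset.mem_univ k)).symm

lemma rotC_mulVec (k : Fin S) (b : Fin S → Bool) :
    (rotC S k) *ᵥ (uvec S b) = (if b k then -Complex.I else Complex.I) • uvec S b := by
  classical
  funext v
  set P : ℂ := ∏ n ∈ Finset.univ.erase k, fct (b n) (v n) with hP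
  have key : ∀ j : Fin 2, rotC S k v (Function.update v k j) =
      (!![0, -1; 1, 0] : Matrix (Fin 2) (Fin 2) ℂ) (v k) j := by
    intro j
    rw [rotC_apply]
    have h1 : ∏ n ∈ Finset.univ.erase k,
        (if v n = Function.update v k j n then (1 : ℂ) else 0) = 1 := by
      refine Finset.prod_eq_one fun n hn => ?_
      rw [Function.update_of_ne (Finset.mem_erase.mp hn).1, if_pos rfl]
    rw [Function.update_self, h1, mul_one]
  have huvec : ∀ j : Fin 2, uvec S b (Function.update v k j) = fct (b k) j * P := by
    intro j
    rw [uvec_split b k]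
    rw [Function.update_self]
    congr 1
    refine Finset.prod_congr rfl fun n hn => ?_
    rw [Function.update_of_ne (Finset.mem_erase.mp hn).1]
  have hzero : ∀ w ∈ Finset.univ,
      w ∉ ({Function.update v k 0, Function.update v k 1} : Finset (Fin S → Fin 2)) →
      rotC S k v w * uvec S b w = 0 := by
    intro w _ hw
    have hex : ∃ n, n ≠ k ∧ v n ≠ w n := by
      by_contra hc
      push_neg at hc
      apply hw
      have hwe : w = Function.update v k (w k) := by
        funext n
        by_cases hn : n = k
        · subst hn; rw [Function.update_self]
        · rw [Function.update_of_ne hn]; exact (hc n hn).symm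
      rw [hwe]
      rcases fin2 (w k) with h | h <;> rw [h] <;>
        simp [Finset.mem_insert, Finset.mem_singleton]
    obtain ⟨n, hnk, hvw⟩ := hex
    rw [rotC_apply]
    have h0 : ∏ n' ∈ Finset.univ.erase k, (if v n' = w n' then (1 : ℂ) else 0) = 0 :=
      Finset.prod_eq_zero (Finset.mem_erase.mpr ⟨hnk, Finset.mem_univ n⟩) (if_neg hvw)
    rw [h0, mul_zero, zero_mul]
  have hne : Function.update v k 0 ≠ Function.update v k (1 : Fin 2) := by
    intro h
    have h2 := congrFun h k
    rw [Function.update_self, Function.update_self] at h2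
    exact absurd h2 (by decide)
  have keycase : ∀ (a : Fin 2) (c : Bool),
      (!![0, -1; 1, 0] : Matrix (Fin 2) (Fin 2) ℂ) a 0 * fct c 0 +
        (!![0, -1; 1, 0] : Matrix (Fin 2) (Fin 2) ℂ) a 1 * fct c 1
      = (if c then -Complex.I else Complex.I) * fct c a := by
    intro a c
    fin_cases a <;> cases c <;>
      simp [fct, Complex.I_mul_I]
  calc (rotC S k *ᵥ uvec S b) v
      = ∑ w, rotC S k v w * uvec S b w := by
        simp [Matrix.mulVec, dotProduct]
    _ = ∑ w ∈ ({Function.update v k 0, Function.update v k 1} :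
          Finset (Fin S → Fin 2)), rotC S k v w * uvec S b w :=
        (Finset.sum_subset (Finset.subset_univ _) hzero).symm
    _ = rotC S k v (Function.update v k 0) * uvec S b (Function.update v k 0) +
        rotC S k v (Function.update v k 1) * uvec S b (Function.update v k 1) :=
        Finset.sum_pair hne
    _ = ((!![0, -1; 1, 0] : Matrix (Fin 2) (Fin 2) ℂ) (v k) 0 * fct (b k) 0 +
        (!![0, -1; 1, 0] : Matrix (Fin 2) (Fin 2) ℂ) (v k) 1 * fct (b k) 1) * P := by
        rw [key 0, key 1, huvec 0, huvec 1]; ring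
    _ = ((if b k then -Complex.I else Complex.I) * fct (b k) (v k)) * P := by
        rw [keycase (v k) (b k)]
    _ = (if b k then -Complex.I else Complex.I) • uvec S b v := by
        rw [smul_eq_mul, uvec_split b k v]; ring

lemma sum_mulVec' {ι m : Type*} [Fintype m] (s : Finset ι)
    (A : ι → Matrix m m ℂ) (v : m → ℂ) :
    (∑ i ∈ s, A i) *ᵥ v = ∑ i ∈ s, A i *ᵥ v := by
  classical
  induction s using Finset.cons_induction with
  | empty => simp [Matrix.zero_mulVec]
  | cons a s ha ih => rw [Finset.sum_cons, Finset.sum_cons, Matrix.add_mulVec, ih]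

lemma pair_mulVec (k k' : Fin S) (b : Fin S → Bool) :
    (rotC S k * (rotC S k')ᵀ) *ᵥ uvec S b
      = ((sgn (b k) * sgn (b k') : ℝ) : ℂ) • uvec S b := by
  rw [← Matrix.mulVec_mulVec, rotC_transpose, Matrix.neg_mulVec, rotC_mulVec,
    ← neg_smul, Matrix.mulVec_smul, rotC_mulVec, smul_smul]
  congr 1
  cases hb : b k <;> cases hb' : b k' <;>
    simp [sgn, Complex.I_mul_I] <;> ring_nf <;> simp [Complex.I_sq]

/-- The complexified matrix M. -/
noncomputable def Mc (S : ℕ) (o : Fin S → ℝ) :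
    Matrix (Fin S → Fin 2) (Fin S → Fin 2) ℂ :=
  ∑ k : Fin S, ∑ k' : Fin S,
    ((o k * o k' : ℝ) : ℂ) • (rotC S k * (rotC S k')ᵀ)

lemma Mc_mulVec_uvec (o : Fin S → ℝ) (b : Fin S → Bool) :
    Mc S o *ᵥ uvec S b = (((∑ i, sgn (b i) * o i) ^ 2 : ℝ) : ℂ) • uvec S b := by
  rw [Mc, sum_mulVec']
  have h1 : ∀ k : Fin S, (∑ k' : Fin S,
        ((o k * o k' : ℝ) : ℂ) • (rotC S k * (rotC S k')ᵀ)) *ᵥ uvec S b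
      = (∑ k' : Fin S, ((o k * o k' * (sgn (b k) * sgn (b k')) : ℝ) : ℂ)) • uvec S b := by
    intro k
    rw [sum_mulVec', Finset.sum_smul]
    refine Finset.sum_congr rfl fun k' _ => ?_
    rw [Matrix.smul_mulVec, pair_mulVec, smul_smul]
    push_cast
    rw [mul_assoc]
  rw [Finset.sum_congr rfl fun k _ => h1 k, ← Finset.sum_smul]
  congr 1
  push_cast
  rw [sq, Finset.sum_mul_sum]
  refine Finset.sum_congr rfl fun k _ => Finset.sum_congr rfl fun k' _ => by ring

lemma uvec_ortho (x y : Fin S → Fin 2) :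
    ∑ b : Fin S → Bool, uvec S b x * (starRingEnd ℂ) (uvec S b y)
      = if x = y then ((2 : ℂ) ^ S) else 0 := by
  classical
  have h1 : ∀ b : Fin S → Bool, uvec S b x * (starRingEnd ℂ) (uvec S b y)
      = ∏ k, (fct (b k) (x k) * (starRingEnd ℂ) (fct (b k) (y k))) := by
    intro b
    rw [uvec, uvec, map_prod, ← Finset.prod_mul_distrib]
  rw [Finset.sum_congr rfl fun b _ => h1 b,
    ← Fintype.prod_sum fun (k : Fin S) (c : Bool) =>
      fct c (x k) * (starRingEnd ℂ) (fct c (y k))]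
  have site : ∀ k : Fin S, (∑ c : Bool, fct c (x k) * (starRingEnd ℂ) (fct c (y k)))
      = if x k = y k then 2 else 0 := by
    intro k
    rcases fin2 (x k) with h | h <;> rcases fin2 (y k) with h' | h' <;>
      rw [h, h'] <;> simp [fct, Complex.conj_I, Complex.I_mul_I] <;> norm_num <;> ring_nf <;>
        simp [Complex.I_sq] <;> ring
  rw [Finset.prod_congr rfl fun k _ => site k]
  by_cases hxy : x = y
  · subst hxy; simp
  · rw [if_neg hxy]
    have : ∃ k, x k ≠ y k := by
      by_contra hc
      push_neg at hc
      exact hxy (funext hc)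
    obtain ⟨k, hk⟩ := this
    exact Finset.prod_eq_zero (Finset.mem_univ k) (if_neg hk)

lemma exists_coeff (v : (Fin S → Fin 2) → ℝ) (hv : v ≠ 0) :
    ∃ b : Fin S → Bool, uvec S b ⬝ᵥ (fun x => (v x : ℂ)) ≠ 0 := by
  classical
  by_contra hc
  push_neg at hc
  apply hv
  funext y
  have h0 : ∑ b : Fin S → Bool, (starRingEnd ℂ) (uvec S b y) *
      (uvec S b ⬝ᵥ (fun x => (v x : ℂ))) = 0 := by
    simp only [hc, mul_zero, Finset.sum_const_zero]
  have h1 : ∑ b : Fin S → Bool, (starRingEnd ℂ) (uvec S b y) *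
      (uvec S b ⬝ᵥ (fun x => (v x : ℂ)))
      = ∑ x, (∑ b : Fin S → Bool, uvec S b x * (starRingEnd ℂ) (uvec S b y)) * (v x : ℂ) := by
    simp only [dotProduct, Finset.mul_sum]
    rw [Finset.sum_comm]
    refine Finset.sum_congr rfl fun x _ => ?_
    rw [Finset.sum_mul]
    refine Finset.sum_congr rfl fun b _ => by ring
  rw [h1] at h0
  have h2 : ∑ x, (∑ b : Fin S → Bool, uvec S b x * (starRingEnd ℂ) (uvec S b y)) * (v x : ℂ)
      = (2 : ℂ) ^ S * (v y : ℂ) := by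
    rw [Finset.sum_congr rfl fun x _ => by rw [uvec_ortho x y]]
    rw [Finset.sum_eq_single y (fun x _ hx => by rw [if_neg hx, zero_mul])
      (fun h => absurd (Finset.mem_univ y) h), if_pos rfl]
  rw [h2] at h0
  rcases mul_eq_zero.mp h0 with h | h
  · exact absurd h (pow_ne_zero _ two_ne_zero)
  · exact_mod_cast h

lemma Mc_symm (o : Fin S → ℝ) : (Mc S o)ᵀ = Mc S o := by
  rw [Mc, Matrix.transpose_sum]
  rw [Finset.sum_comm]
  refine Finset.sum_congr rfl fun k _ => ?_
  rw [Matrix.transpose_sum]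
  refine Finset.sum_congr rfl fun k' _ => ?_
  rw [Matrix.transpose_smul, Matrix.transpose_mul, Matrix.transpose_transpose]
  rw [mul_comm (o k') (o k)]

end RotAux

open RotAux in
/-- **Spectral bounds for the sum of rotation tensor factors.**
For `o ∈ ℝ^S`, the matrix `M = Σ_{k,k'} o_k·o_{k'}·C_k·C_{k'}ᵀ` is positive semidefinite
and every eigenvalue `λ` of `M` satisfies
`min_{g ∈ {−1,1}^S} (gᵀo)² ≤ λ ≤ (Σ_k |o_k|)²`. -/
theorem rotFactor_quadratic_spectrum (S : ℕ) (hS : 1 ≤ S) (o : Fin S → ℝ) :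
    (∑ k : Fin S, ∑ k' : Fin S,
        (o k * o k') • (rotFactor S k * (rotFactor S k')ᵀ)).PosSemidef
    ∧ ∀ (lam : ℝ) (v : (Fin S → Fin 2) → ℝ), v ≠ 0 →
        (∑ k : Fin S, ∑ k' : Fin S,
            (o k * o k') • (rotFactor S k * (rotFactor S k')ᵀ)).mulVec v = lam • v →
        ((∃ g : Fin S → ℝ, (∀ i, g i = 1 ∨ g i = -1) ∧ (∑ i, g i * o i) ^ 2 ≤ lam)
          ∧ lam ≤ (∑ i, |o i|) ^ 2) := by
  classical
  set A : Matrix (Fin S → Fin 2) (Fin S → Fin 2) ℝ := ∑ k : Fin S, o k • rotFactor S k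
  have hM : (∑ k : Fin S, ∑ k' : Fin S,
      (o k * o k') • (rotFactor S k * (rotFactor S k')ᵀ)) = A * Aᵀ := by
    rw [Matrix.transpose_sum, Finset.sum_mul]
    refine Finset.sum_congr rfl fun k _ => ?_
    rw [Finset.mul_sum]
    refine Finset.sum_congr rfl fun k' _ => ?_
    rw [Matrix.transpose_smul, smul_mul_assoc, mul_smul_comm, smul_smul]
  constructor
  · rw [hM]
    have := Matrix.posSemidef_self_mul_conjTranspose A
    rwa [Matrix.conjTranspose_eq_transpose_of_trivial] at this
  · intro lam v hv heig
    -- complexify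
    set vc : (Fin S → Fin 2) → ℂ := fun x => ((v x : ℝ) : ℂ) with hvc
    have hbridge : Mc S o *ᵥ vc = (lam : ℂ) • vc := by
      have hmap : (∑ k : Fin S, ∑ k' : Fin S,
          (o k * o k') • (rotFactor S k * (rotFactor S k')ᵀ)).map Complex.ofReal
            = Mc S o := by
        ext x y
        simp only [Matrix.map_apply, Matrix.sum_apply, Matrix.smul_apply, Mc,
          Matrix.mul_apply, Matrix.transpose_apply, rotC, smul_eq_mul]
        push_cast
        rfl
      funext i
      have hMij : ∀ j, Mc S o i j = (((∑ k : Fin S, ∑ k' : Fin S,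
          (o k * o k') • (rotFactor S k * (rotFactor S k')ᵀ)) i j : ℝ) : ℂ) :=
        fun j => by rw [← hmap]; rfl
      calc (Mc S o *ᵥ vc) i = ∑ j, Mc S o i j * vc j := rfl
        _ = ∑ j, (((∑ k : Fin S, ∑ k' : Fin S,
              (o k * o k') • (rotFactor S k * (rotFactor S k')ᵀ)) i j : ℝ) : ℂ)
              * ((v j : ℝ) : ℂ) := Finset.sum_congr rfl fun j _ => by rw [hMij j]
        _ = (((∑ j, (∑ k : Fin S, ∑ k' : Fin S,
              (o k * o k') • (rotFactor S k * (rotFactor S k')ᵀ)) i j * v j : ℝ)) : ℂ) := by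
              push_cast; rfl
        _ = ((((∑ k : Fin S, ∑ k' : Fin S,
              (o k * o k') • (rotFactor S k * (rotFactor S k')ᵀ)) *ᵥ v) i : ℝ) : ℂ) := rfl
        _ = (((lam • v) i : ℝ) : ℂ) := by rw [heig]
        _ = ((lam : ℂ) • vc) i := by simp [hvc]
    obtain ⟨b, hb⟩ := exists_coeff v hv
    set mu : ℝ := (∑ i, sgn (b i) * o i) ^ 2 with hmu
    have hmain : lam = mu := by
      have e1 : uvec S b ⬝ᵥ (Mc S o *ᵥ vc) = (lam : ℂ) * (uvec S b ⬝ᵥ vc) := by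
        rw [hbridge, dotProduct_smul, smul_eq_mul]
      have e2 : uvec S b ⬝ᵥ (Mc S o *ᵥ vc) = (mu : ℂ) * (uvec S b ⬝ᵥ vc) := by
        rw [Matrix.dotProduct_mulVec, ← Matrix.mulVec_transpose, Mc_symm,
          Mc_mulVec_uvec, ← hmu, smul_dotProduct, smul_eq_mul]
      have := e1.symm.trans e2
      have h4 : ((lam : ℂ) - (mu : ℂ)) * (uvec S b ⬝ᵥ vc) = 0 := by
        rw [sub_mul, this, sub_self]
      rcases mul_eq_zero.mp h4 with h | h
      · have : (lam : ℂ) = (mu : ℂ) := by linear_combination h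
        exact_mod_cast this
      · exact absurd h hb
    refine ⟨⟨fun i => sgn (b i), fun i => ?_, le_of_eq hmain.symm⟩, ?_⟩
    · cases hbi : b i
      · exact Or.inr (by simp [sgn, hbi])
      · exact Or.inl (by simp [sgn, hbi])
    · rw [hmain, hmu]
      have h1 : |∑ i, sgn (b i) * o i| ≤ ∑ i, |o i| := by
        refine (Finset.abs_sum_le_sum_abs _ _).trans ?_
        refine le_of_eq (Finset.sum_congr rfl fun i _ => ?_)
        rw [abs_mul]
        cases b i <;> simp [sgn]
      calc (∑ i, sgn (b i) * o i) ^ 2 = |∑ i, sgn (b i) * o i| ^ 2 := (sq_abs _).symm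
        _ ≤ (∑ i, |o i|) ^ 2 := by
            exact pow_le_pow_left₀ (abs_nonneg _) h1 2
end

section
/- Let N ≥ 1, 1 ≤ S ≤ N, o ∈ ℝ^N, and let O := Σ_{k=1}^N o_k Z_k, where Z_k is the N-qubit Pauli operator acting as Z on qubit k and as identity on all other qubits. Let Q be a nonempty finite collection of subsets of {1,…,N}, each of size S. For a subset s ⊆ {1,…,N} and a function h: s → {1,2,3}, let σ_h^s denote the N-qubit Pauli operator acting as σ_{h(q)} on each qubit q ∈ s and as identity elsewhere. Let ρ₁,…,ρ_m ∈ M_{2^N}(ℂ) be Hermitian with trace one. Define K_∞ ∈ ℝ^{m×m} by [K_∞]_{aa'} := (1/(3^S·|Q|))·Σ_{s ∈ Q} Σ_{h: s→{1,2,3}} (1/4)·Tr[i[O, σ_h^s]ρ_a]·Tr[i[O, σ_h^s]ρ_{a'}]. For w ∈ {0,1,…,S−1}, let A_{Q,w} be the real matrix with rows indexed by pairs (s, p) with s ∈ Q and p: s → {1,2,3} taking the value 3 exactly w times, and with entries [A_{Q,w}]_{(s,p),a} := Tr[σ_p^s ρ_a]. Then, in the semidefinite (Loewner) order on real symmetric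 m×m matrices, (1/(3^S·|Q|))·Σ_{w=0}^{S−1} (Σ_{k=1}^N |o_k|)²·A_{Q,w}ᵀA_{Q,w} ≽ K_∞ ≽ (1/(3^S·|Q|))·Σ_{w=0}^{S−1} Δ_{S−w}·A_{Q,w}ᵀA_{Q,w}, where Δ_j := min{(gᵀo)² : g ∈ {0,−1,1}^N, 1 ≤ ‖g‖₁ ≤ j}. -/
open Matrix

/-- The single-qubit Pauli matrices `σ₀ = I, σ₁ = X, σ₂ = Y, σ₃ = Z`. -/
noncomputable def pauli : Fin 4 → Matrix (Fin 2) (Fin 2) ℂ :=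
  ![1, !![0, 1; 1, 0], !![0, -Complex.I; Complex.I, 0], !![1, 0; 0, -1]]

/-- The `N`-qubit Pauli string `σ_i = σ_{i₁} ⊗ ⋯ ⊗ σ_{i_N}`, as a matrix on `ℂ^{2^N}`
(whose index set is realized as `Fin N → Fin 2`). -/
noncomputable def pauliString (N : ℕ) (i : Fin N → Fin 4) :
    Matrix (Fin N → Fin 2) (Fin N → Fin 2) ℂ :=
  Matrix.of fun v w => ∏ n : Fin N, pauli (i n) (v n) (w n)

/-- The Pauli operator `σ_h^s` acting as `σ_{h(q)}` (a letter in `{1,2,3} = {X,Y,Z}`)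
on each qubit `q ∈ s` and as identity elsewhere. -/
noncomputable def subsetPauliXYZ (N : ℕ) (s : Finset (Fin N)) (h : {q // q ∈ s} → Fin 3) :
    Matrix (Fin N → Fin 2) (Fin N → Fin 2) ℂ :=
  pauliString N (fun q => if hq : q ∈ s then (h ⟨q, hq⟩).succ else 0)

/-- The observable `O = Σ_k o_k Z_k`, where `Z_k` acts as `Z` on qubit `k` and as
identity elsewhere. -/
noncomputable def zObservable (N : ℕ) (o : Fin N → ℝ) :
    Matrix (Fin N → Fin 2) (Fin N → Fin 2) ℂ :=
  ∑ k : Fin N, (o k : ℂ) • pauliString N (fun q => if q = k then 3 else 0)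

/-- `Δ_j = min{(gᵀo)² : g ∈ {0,−1,1}^N, 1 ≤ ‖g‖₁ ≤ j}`. -/
noncomputable def deltaMin (N : ℕ) (o : Fin N → ℝ) (j : ℕ) : ℝ :=
  sInf {t : ℝ | ∃ g : Fin N → ℝ, (∀ i, g i = 0 ∨ g i = 1 ∨ g i = -1) ∧
    1 ≤ ∑ i, |g i| ∧ ∑ i, |g i| ≤ (j : ℝ) ∧ t = (∑ i, g i * o i) ^ 2}

/-- The asymptotic QNTK at `θ = 0` for gate Hamiltonians drawn uniformly from the Pauli
strings in `{X,Y,Z}^{⊗S}` supported on a uniformly random set from `Q`: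
`[K_∞]_{aa'} = (1/(3^S·|Q|))·Σ_{s∈Q} Σ_{h:s→{1,2,3}}
   (1/4)·Tr[i[O,σ_h^s]ρ_a]·Tr[i[O,σ_h^s]ρ_{a'}]`. -/
noncomputable def asympQNTKxyz (N S m : ℕ) (o : Fin N → ℝ) (Q : Finset (Finset (Fin N)))
    (ρ : Fin m → Matrix (Fin N → Fin 2) (Fin N → Fin 2) ℂ) : Matrix (Fin m) (Fin m) ℝ :=
  Matrix.of fun a a' => (1 / ((3 : ℝ) ^ S * Q.card)) *
    ∑ s ∈ Q, ∑ h : {q // q ∈ s} → Fin 3, (1 / 4 : ℝ) *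
      (((Complex.I • (zObservable N o * subsetPauliXYZ N s h
            - subsetPauliXYZ N s h * zObservable N o)) * ρ a).trace.re *
        ((Complex.I • (zObservable N o * subsetPauliXYZ N s h
            - subsetPauliXYZ N s h * zObservable N o)) * ρ a').trace.re)

/-- The Gram matrix `A_{Q,w}ᵀA_{Q,w}` of the coefficient matrix whose rows are indexed
by pairs `(s, p)` with `s ∈ Q` and `p : s → {1,2,3}` taking the letter `Z` exactly `w`
times, with entries `[A_{Q,w}]_{(s,p),a} = Tr[σ_p^s ρ_a]`. -/
noncomputable def pauliGramW (N m : ℕ) (Q : Finset (Finset (Fin N))) (w : ℕ)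
    (ρ : Fin m → Matrix (Fin N → Fin 2) (Fin N → Fin 2) ℂ) : Matrix (Fin m) (Fin m) ℝ :=
  Matrix.of fun a a' => ∑ s ∈ Q, ∑ p : {q // q ∈ s} → Fin 3,
    (if (Finset.univ.filter fun q => p q = 2).card = w then
      (subsetPauliXYZ N s p * ρ a).trace.re * (subsetPauliXYZ N s p * ρ a').trace.re
    else 0)

/-!
Fix `x ∈ ℝ^m` and `s ∈ Q`, and put `t(p) = Σ_a x_a Tr[σ_p^s ρ_a]` for words `p : s → {X, Y, Z}`.
Up to the factor `1/(3^S|Q|)`, `xᵀK_∞x` is a sum over `s` of `Σ_h (F t)(h)²`, where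
`F = Σ_k o_k F_k` and `F_k` is the action of `σ ↦ ½ i[Z_k, σ]` on coefficients: it swaps `X`
and `Y` at letter `k` (with a sign) and kills words with a `Z` there. Likewise
`xᵀA_{Q,w}ᵀA_{Q,w}x` is a sum of `‖t‖²` restricted to words with `w` letters `Z`. The `F_k` are
simultaneously diagonalised by a tensor-product basis which respects the number of `Z` letters;
on a basis vector with `w` letters `Z`, `F` acts by `i Σ_k λ_k o_k`, with `λ_k = ±1` off the
`Z` letters and `λ_k = 0` on them. For `w < S` the square of this eigenvalue therefore lies
between `Δ_{S-w}` and `(Σ_k |o_k|)²`, and for `w = S` it vanishes; Parseval's identity turns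
these eigenvalue bounds into both Loewner bounds.
-/

open Finset Function

lemma sum_range_mul_sum_ite_eq {α : Type*} [Fintype α] (n : ℕ) (c : ℕ → ℝ) (wt : α → ℕ)
    (f : α → ℝ) :
    ∑ w ∈ range n, c w * ∑ a, (if wt a = w then f a else 0)
      = ∑ a, if wt a < n then c (wt a) * f a else 0 := by
  simp_rw [mul_sum, mul_ite, mul_zero]
  rw [sum_comm]
  simp [mem_range]

lemma gram_isHermitian {n ι : Type*} (I : Finset ι) (f : ι → n → ℝ) :
    (Matrix.of fun a b => ∑ i ∈ I, f i a * f i b).IsHermitian := by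
  ext a b
  simp [mul_comm]

lemma dotProduct_gram_mulVec {n ι : Type*} [Fintype n] (I : Finset ι) (f : ι → n → ℝ)
    (x : n → ℝ) :
    x ⬝ᵥ (Matrix.of fun a b => ∑ i ∈ I, f i a * f i b) *ᵥ x = ∑ i ∈ I, (x ⬝ᵥ f i) ^ 2 := by
  have hsq : ∀ i, (x ⬝ᵥ f i) ^ 2 = ∑ a, ∑ b, x a * (f i a * f i b * x b) := fun i => by
    rw [sq, dotProduct, sum_mul_sum]
    exact sum_congr rfl fun a _ => sum_congr rfl fun b _ => by ring
  simp only [hsq]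
  simp only [dotProduct, mulVec, of_apply, sum_mul, mul_sum]
  exact (sum_congr rfl fun a _ => sum_comm).trans sum_comm

/-- `i[Z, σ_c] = 2 zSign c • σ_{zSwap c}` for `c ∈ {X, Y, Z}`. -/
def zSign : Fin 3 → ℝ := ![-1, 1, 0]

def zSwap : Fin 3 → Fin 3 := ![1, 0, 2]

def zCommSign : Fin 4 → ℂ := ![0, -2, 2, 0]

def zCommPartner : Fin 4 → Fin 4 := ![0, 2, 1, 3]

lemma smul_pauli_three_commutator (c : Fin 4) :
    Complex.I • (pauli 3 * pauli c - pauli c * pauli 3) = zCommSign c • pauli (zCommPartner c) := by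
  fin_cases c <;>
  · ext i j
    fin_cases i <;> fin_cases j <;>
      simp [pauli, zCommSign, zCommPartner, Complex.ext_iff] <;> norm_num

lemma zCommSign_succ (c : Fin 3) : zCommSign c.succ = ((2 * zSign c : ℝ) : ℂ) := by
  fin_cases c <;> simp [zCommSign, zSign]

lemma zCommPartner_succ (c : Fin 3) : zCommPartner c.succ = (zSwap c).succ := by
  fin_cases c <;> rfl

lemma zSwap_zSwap (c : Fin 3) : zSwap (zSwap c) = c := by
  fin_cases c <;> rfl

section PauliString

variable {N : ℕ}

lemma pauliString_mul (i j : Fin N → Fin 4) :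
    pauliString N i * pauliString N j =
      Matrix.of fun v w => ∏ n, (pauli (i n) * pauli (j n)) (v n) (w n) := by
  ext v w
  simp only [Matrix.mul_apply, pauliString, Matrix.of_apply]
  rw [prod_univ_sum, ← Fintype.piFinset_univ]
  exact sum_congr rfl fun u _ => prod_mul_distrib.symm

/-- Only the `k`-th tensor factor of `σ_e` fails to commute with `Z_k`. -/
lemma smul_pauliString_z_commutator (k : Fin N) (e : Fin N → Fin 4) :
    Complex.I • (pauliString N (fun q => if q = k then 3 else 0) * pauliString N e
      - pauliString N e * pauliString N (fun q => if q = k then 3 else 0))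
      = zCommSign (e k) • pauliString N (update e k (zCommPartner (e k))) := by
  rw [pauliString_mul, pauliString_mul]
  ext v w
  have key := congrArg (fun M : Matrix (Fin 2) (Fin 2) ℂ => M (v k) (w k))
    (smul_pauli_three_commutator (e k))
  simp only [Matrix.smul_apply, Matrix.sub_apply, smul_eq_mul] at key
  simp only [Matrix.smul_apply, Matrix.sub_apply, Matrix.of_apply, pauliString, smul_eq_mul]
  rw [← mul_prod_erase univ _ (mem_univ k), ← mul_prod_erase univ _ (mem_univ k),
    ← mul_prod_erase univ (fun n => pauli (update e k (zCommPartner (e k)) n) (v n) (w n))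
      (mem_univ k)]
  have hrest : ∀ n ∈ univ.erase k,
      (pauli (if n = k then 3 else 0) * pauli (e n)) (v n) (w n) = pauli (e n) (v n) (w n) ∧
      (pauli (e n) * pauli (if n = k then 3 else 0)) (v n) (w n) = pauli (e n) (v n) (w n) ∧
      pauli (update e k (zCommPartner (e k)) n) (v n) (w n) = pauli (e n) (v n) (w n) := by
    intro n hn
    have hnk := ne_of_mem_erase hn
    simp only [if_neg hnk, update_of_ne hnk, show pauli 0 = 1 from rfl, one_mul, mul_one,
      and_self]
  rw [prod_congr rfl fun n hn => (hrest n hn).1, prod_congr rfl fun n hn => (hrest n hn).2.1,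
    prod_congr rfl fun n hn => (hrest n hn).2.2, if_pos rfl, update_self]
  linear_combination (∏ n ∈ univ.erase k, pauli (e n) (v n) (w n)) * key

end PauliString

section ZCommutator

variable {ι : Type*}

lemma update_zSwap_involutive [DecidableEq ι] (k : ι) :
    Involutive fun h : ι → Fin 3 => update h k (zSwap (h k)) := fun h => by
  simp only [update_self, update_idem, zSwap_zSwap, update_eq_self]

variable [Fintype ι]

def zWeight (h : ι → Fin 3) : ℕ := #{k | h k = 2}

lemma zWeight_le_card (χ : ι → Fin 3) : zWeight χ ≤ Fintype.card ι := card_filter_le _ _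

/-- `t ↦ Σ_b conj (zEigvec3 c b) * t b` is an eigenfunctional, with eigenvalue `i * zEigval3 c`,
of the single-site map `t ↦ (b ↦ zSign b * t (zSwap b))`; the rows are orthogonal, of squared
norm `2`. -/
noncomputable def zEigvec3 : Fin 3 → Fin 3 → ℂ :=
  ![![1, -Complex.I, 0], ![1, Complex.I, 0], ![0, 0, 1 + Complex.I]]

def zEigval3 : Fin 3 → ℝ := ![1, -1, 0]

noncomputable def zEigvec (χ h : ι → Fin 3) : ℂ := ∏ k, zEigvec3 (χ k) (h k)

def zEigval (o : ι → ℝ) (χ : ι → Fin 3) : ℝ := ∑ k, zEigval3 (χ k) * o k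

lemma zEigvec3_orthogonal (a b : Fin 3) :
    ∑ c, starRingEnd ℂ (zEigvec3 c a) * zEigvec3 c b = if a = b then 2 else 0 := by
  fin_cases a <;> fin_cases b <;>
    simp [zEigvec3, Fin.sum_univ_three, Complex.ext_iff] <;> norm_num

lemma zEigvec3_swap (c b : Fin 3) :
    (zSign (zSwap b) : ℂ) * starRingEnd ℂ (zEigvec3 c (zSwap b))
      = Complex.I * zEigval3 c * starRingEnd ℂ (zEigvec3 c b) := by
  fin_cases c <;> fin_cases b <;>
    simp [zEigvec3, zSign, zSwap, zEigval3]

lemma zEigvec3_eq_zero {c b : Fin 3} (h : ¬(c = 2 ↔ b = 2)) : zEigvec3 c b = 0 := by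
  fin_cases c <;> fin_cases b <;> simp_all [zEigvec3]

lemma zEigvec_eq_zero_of_zWeight_ne {χ h : ι → Fin 3} (hw : zWeight χ ≠ zWeight h) :
    zEigvec χ h = 0 := by
  obtain ⟨k, hk⟩ : ∃ k, ¬(χ k = 2 ↔ h k = 2) := by
    by_contra! hiff
    exact hw (by rw [zWeight, zWeight, filter_congr fun k _ => hiff k])
  exact prod_eq_zero (mem_univ k) (zEigvec3_eq_zero hk)

lemma zEigval_eq_zero_of_zWeight_eq_card (o : ι → ℝ) {χ : ι → Fin 3}
    (hχ : zWeight χ = Fintype.card ι) : zEigval o χ = 0 := by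
  have hall : ∀ k, χ k = 2 := by
    simpa [zWeight, filter_eq_self] using (card_eq_iff_eq_univ _).mp hχ
  simp [zEigval, hall, zEigval3]

lemma abs_zEigval3 (c : Fin 3) : |zEigval3 c| = if c ≠ 2 then 1 else 0 := by
  fin_cases c <;> simp [zEigval3, Fin.ext_iff]

lemma abs_zEigval_le (o : ι → ℝ) (χ : ι → Fin 3) :
    |zEigval o χ| ≤ ∑ k, |o k| :=
  (abs_sum_le_sum_abs _ _).trans <| sum_le_sum fun k _ => by
    rw [abs_mul]
    refine mul_le_of_le_one_left (abs_nonneg _) ?_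
    rw [abs_zEigval3]
    split_ifs <;> norm_num

variable [DecidableEq ι]

def zCommSite (k : ι) (t : (ι → Fin 3) → ℝ) (h : ι → Fin 3) : ℝ :=
  zSign (h k) * t (update h k (zSwap (h k)))

/-- If `t p = Tr[σ_p ρ]` on Pauli words `p : ι → {X, Y, Z}`, then
`zCommOp o t h = ½ Tr[i[Σ_k o_k Z_k, σ_h] ρ]`. -/
def zCommOp (o : ι → ℝ) (t : (ι → Fin 3) → ℝ) (h : ι → Fin 3) : ℝ :=
  ∑ k, o k * zCommSite k t h

noncomputable def zTransform (t : (ι → Fin 3) → ℝ) (χ : ι → Fin 3) : ℂ :=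
  ∑ h, starRingEnd ℂ (zEigvec χ h) * t h

def weightNormSq (t : (ι → Fin 3) → ℝ) (w : ℕ) : ℝ :=
  ∑ h, if zWeight h = w then t h ^ 2 else 0

lemma zEigvec_orthogonal (h h' : ι → Fin 3) :
    ∑ χ, starRingEnd ℂ (zEigvec χ h) * zEigvec χ h'
      = if h = h' then (2 : ℂ) ^ Fintype.card ι else 0 := by
  simp only [zEigvec, map_prod, ← prod_mul_distrib]
  rw [← Fintype.piFinset_univ, ← prod_univ_sum (fun _ : ι => (univ : Finset (Fin 3)))
      (fun k c => starRingEnd ℂ (zEigvec3 c (h k)) * zEigvec3 c (h' k)),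
    prod_congr rfl fun k _ => zEigvec3_orthogonal (h k) (h' k)]
  split_ifs with hh
  · simp [hh, card_univ]
  · obtain ⟨k, hk⟩ := ne_iff.mp hh
    exact prod_eq_zero (mem_univ k) (if_neg hk)

lemma sum_normSq_zTransform (t : (ι → Fin 3) → ℝ) :
    ∑ χ, Complex.normSq (zTransform t χ) = 2 ^ Fintype.card ι * ∑ h, t h ^ 2 := by
  have key : ∑ χ, (Complex.normSq (zTransform t χ) : ℂ)
      = (2 : ℂ) ^ Fintype.card ι * ∑ h, (t h : ℂ) ^ 2 := by
    calc ∑ χ, (Complex.normSq (zTransform t χ) : ℂ)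
        = ∑ χ, ∑ h, ∑ h', (t h : ℂ) * t h' *
            (starRingEnd ℂ (zEigvec χ h) * zEigvec χ h') := by
          refine sum_congr rfl fun χ _ => ?_
          rw [← Complex.mul_conj, zTransform, map_sum, sum_mul_sum]
          refine sum_congr rfl fun h _ => sum_congr rfl fun h' _ => ?_
          simp only [map_mul, Complex.conj_conj, Complex.conj_ofReal]
          ring
      _ = ∑ h, ∑ h', (t h : ℂ) * t h' * ∑ χ, starRingEnd ℂ (zEigvec χ h) * zEigvec χ h' := by
          rw [sum_comm]
          refine sum_congr rfl fun h _ => ?_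
          rw [sum_comm]
          simp only [mul_sum]
      _ = (2 : ℂ) ^ Fintype.card ι * ∑ h, (t h : ℂ) ^ 2 := by
          simp_rw [zEigvec_orthogonal, mul_ite, mul_zero, sum_ite_eq, mem_univ, if_true, mul_sum]
          exact sum_congr rfl fun h _ => by ring
  exact_mod_cast key

lemma zEigvec_update (χ h : ι → Fin 3) (k : ι) :
    (zSign (zSwap (h k)) : ℂ) * starRingEnd ℂ (zEigvec χ (update h k (zSwap (h k))))
      = Complex.I * zEigval3 (χ k) * starRingEnd ℂ (zEigvec χ h) := by
  rw [zEigvec, zEigvec, ← mul_prod_erase univ _ (mem_univ k),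
    ← mul_prod_erase univ (fun n => zEigvec3 (χ n) (h n)) (mem_univ k),
    prod_congr rfl fun n hn => by rw [update_of_ne (ne_of_mem_erase hn)],
    update_self, map_mul, map_mul]
  linear_combination starRingEnd ℂ (∏ n ∈ univ.erase k, zEigvec3 (χ n) (h n)) *
    zEigvec3_swap (χ k) (h k)

lemma zTransform_zCommSite (k : ι) (t : (ι → Fin 3) → ℝ) (χ : ι → Fin 3) :
    zTransform (zCommSite k t) χ = Complex.I * zEigval3 (χ k) * zTransform t χ := by
  have hswap := Fintype.sum_bijective _ (update_zSwap_involutive k).bijective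
    (fun h => starRingEnd ℂ (zEigvec χ h) * (zCommSite k t h : ℂ))
    (fun h => (zSign (zSwap (h k)) : ℂ) *
      starRingEnd ℂ (zEigvec χ (update h k (zSwap (h k)))) * t h)
    fun h => by
      simp only [zCommSite, update_self, update_idem, zSwap_zSwap, update_eq_self]
      push_cast
      ring
  rw [zTransform, hswap, zTransform, mul_sum]
  refine sum_congr rfl fun h _ => ?_
  rw [zEigvec_update]
  ring

lemma zTransform_zCommOp (o : ι → ℝ) (t : (ι → Fin 3) → ℝ) (χ : ι → Fin 3) :
    zTransform (zCommOp o t) χ = Complex.I * zEigval o χ * zTransform t χ := by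
  have hlin : zTransform (zCommOp o t) χ = ∑ k, (o k : ℂ) * zTransform (zCommSite k t) χ := by
    simp only [zTransform, zCommOp, mul_sum, Complex.ofReal_sum, Complex.ofReal_mul]
    rw [sum_comm]
    exact sum_congr rfl fun k _ => sum_congr rfl fun h _ => by ring
  simp only [hlin, zTransform_zCommSite, zEigval, Complex.ofReal_sum, Complex.ofReal_mul,
    mul_sum, sum_mul]
  exact sum_congr rfl fun k _ => by ring

lemma zCommOp_sum_mul {α : Type*} (I : Finset α) (o : ι → ℝ) (x : α → ℝ)
    (t : α → (ι → Fin 3) → ℝ) (h : ι → Fin 3) :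
    zCommOp o (fun p => ∑ a ∈ I, x a * t a p) h = ∑ a ∈ I, x a * zCommOp o (t a) h := by
  simp only [zCommOp, zCommSite, mul_sum]
  rw [sum_comm]
  exact sum_congr rfl fun _ _ => sum_congr rfl fun _ _ => by ring

lemma zTransform_weightPart (t : (ι → Fin 3) → ℝ) (w : ℕ) (χ : ι → Fin 3) :
    zTransform (fun h => if zWeight h = w then t h else 0) χ
      = if zWeight χ = w then zTransform t χ else 0 := by
  have hterm : ∀ h, starRingEnd ℂ (zEigvec χ h) * ((if zWeight h = w then t h else 0 : ℝ) : ℂ)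
      = if zWeight χ = w then starRingEnd ℂ (zEigvec χ h) * t h else 0 := by
    intro h
    by_cases hwh : zWeight χ = zWeight h
    · simp only [hwh]
      split_ifs <;> simp
    · simp [zEigvec_eq_zero_of_zWeight_ne hwh]
  rw [zTransform, zTransform, sum_congr rfl fun h _ => hterm h]
  split_ifs <;> simp

lemma two_pow_mul_sum_sq_zCommOp (o : ι → ℝ) (t : (ι → Fin 3) → ℝ) :
    2 ^ Fintype.card ι * ∑ h, zCommOp o t h ^ 2
      = ∑ χ, zEigval o χ ^ 2 * Complex.normSq (zTransform t χ) := by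
  rw [← sum_normSq_zTransform]
  refine sum_congr rfl fun χ _ => ?_
  rw [zTransform_zCommOp, Complex.normSq_mul, Complex.normSq_mul, Complex.normSq_I,
    Complex.normSq_ofReal]
  ring

lemma two_pow_mul_weightNormSq (t : (ι → Fin 3) → ℝ) (w : ℕ) :
    2 ^ Fintype.card ι * weightNormSq t w
      = ∑ χ, if zWeight χ = w then Complex.normSq (zTransform t χ) else 0 := by
  have hparseval := sum_normSq_zTransform fun h => if zWeight h = w then t h else 0
  simp only [zTransform_weightPart, apply_ite Complex.normSq, Complex.normSq_zero, ite_pow,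
    ne_eq, OfNat.ofNat_ne_zero, not_false_eq_true, zero_pow] at hparseval
  rw [weightNormSq, hparseval]

lemma sum_mul_weightNormSq_le_sum_sq_zCommOp (o : ι → ℝ) (t : (ι → Fin 3) → ℝ)
    (Δ : ℕ → ℝ) (hΔ : ∀ χ, zWeight χ < Fintype.card ι → Δ (zWeight χ) ≤ zEigval o χ ^ 2) :
    ∑ w ∈ range (Fintype.card ι), Δ w * weightNormSq t w ≤ ∑ h, zCommOp o t h ^ 2 := by
  rw [← mul_le_mul_iff_of_pos_left (by positivity : (0 : ℝ) < 2 ^ Fintype.card ι), mul_sum,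
    two_pow_mul_sum_sq_zCommOp]
  simp_rw [mul_left_comm _ (Δ _), two_pow_mul_weightNormSq]
  rw [sum_range_mul_sum_ite_eq]
  gcongr with χ
  split_ifs with hχ
  · exact mul_le_mul_of_nonneg_right (hΔ χ hχ) (Complex.normSq_nonneg _)
  · exact mul_nonneg (sq_nonneg _) (Complex.normSq_nonneg _)

lemma sum_sq_zCommOp_le (o : ι → ℝ) (t : (ι → Fin 3) → ℝ) (U : ℝ)
    (hU : ∀ χ, zEigval o χ ^ 2 ≤ U) :
    ∑ h, zCommOp o t h ^ 2 ≤ U * ∑ w ∈ range (Fintype.card ι), weightNormSq t w := by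
  rw [← mul_le_mul_iff_of_pos_left (by positivity : (0 : ℝ) < 2 ^ Fintype.card ι),
    two_pow_mul_sum_sq_zCommOp, mul_left_comm, mul_sum]
  simp_rw [two_pow_mul_weightNormSq]
  rw [mul_sum, sum_range_mul_sum_ite_eq _ fun _ => U]
  gcongr with χ
  split_ifs with hχ
  · exact mul_le_mul_of_nonneg_right (hU χ) (Complex.normSq_nonneg _)
  · rw [zEigval_eq_zero_of_zWeight_eq_card o
      ((zWeight_le_card χ).antisymm (not_lt.mp hχ)), sq, zero_mul, zero_mul]

end ZCommutator

/-- A word `χ` with `w < |s|` letters `Z` gives a sign vector `g ∈ {0, ±1}^N` supported on the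
non-`Z` letters, with `‖g‖₁ = |s| - w` and `gᵀo = zEigval o χ`. -/
lemma deltaMin_le_zEigval_sq {N : ℕ} (o : Fin N → ℝ) {s : Finset (Fin N)} (χ : s → Fin 3)
    (hχ : zWeight χ < s.card) :
    deltaMin N o (s.card - zWeight χ) ≤ zEigval (fun k : s => o k) χ ^ 2 := by
  set g : Fin N → ℝ := fun q => if hq : q ∈ s then zEigval3 (χ ⟨q, hq⟩) else 0
  have hsign : ∀ c, zEigval3 c = 0 ∨ zEigval3 c = 1 ∨ zEigval3 c = -1 := by
    intro c; fin_cases c <;> norm_num [zEigval3]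
  have hnorm : ∑ i, |g i| = ((s.card - zWeight χ : ℕ) : ℝ) := by
    have hcard := card_filter_add_card_filter_not (s := (univ : Finset s)) (p := fun k => χ k = 2)
    rw [card_univ, Fintype.card_coe] at hcard
    calc ∑ i, |g i| = ∑ k : s, |zEigval3 (χ k)| := by
          simp only [g, apply_dite abs, abs_zero]
          exact (sum_attach_eq_sum_dite s fun k => |zEigval3 (χ k)|).symm
      _ = ((s.card - zWeight χ : ℕ) : ℝ) := by
          simp only [abs_zEigval3, sum_boole, ne_eq]
          rw [Nat.eq_sub_of_add_eq' hcard]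
          rfl
  have hdot : ∑ i, g i * o i = zEigval (fun k : s => o k) χ := by
    simp only [g, dite_mul, zero_mul]
    exact (sum_attach_eq_sum_dite s fun k => zEigval3 (χ k) * o k).symm
  refine csInf_le ⟨0, fun _ ⟨_, _, _, _, ht⟩ => ht ▸ sq_nonneg _⟩
    ⟨g, fun i => ?_, ?_, hnorm.le, by rw [hdot]⟩
  · by_cases hi : i ∈ s
    · simpa only [g, dif_pos hi] using hsign _
    · simp [g, dif_neg hi]
  · rw [hnorm]
    exact_mod_cast Nat.sub_pos_of_lt hχ

section SubsetBounds

variable {N : ℕ} (o : Fin N → ℝ) (s : Finset (Fin N)) (t : (s → Fin 3) → ℝ)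

lemma sum_sq_zCommOp_le_sq_sum_abs_mul :
    ∑ h, zCommOp (fun k : s => o k) t h ^ 2
      ≤ (∑ k, |o k|) ^ 2 * ∑ w ∈ range s.card, weightNormSq t w := by
  have hsub : ∑ k : s, |o k| ≤ ∑ k, |o k| := by
    rw [sum_coe_sort s fun k => |o k|]
    exact sum_le_univ_sum_of_nonneg fun k => abs_nonneg _
  simpa only [Fintype.card_coe] using sum_sq_zCommOp_le _ t _ fun χ =>
    sq_abs (zEigval _ χ) ▸ pow_le_pow_left₀ (abs_nonneg _) ((abs_zEigval_le _ χ).trans hsub) 2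

lemma sum_deltaMin_mul_weightNormSq_le :
    ∑ w ∈ range s.card, deltaMin N o (s.card - w) * weightNormSq t w
      ≤ ∑ h, zCommOp (fun k : s => o k) t h ^ 2 := by
  simpa only [Fintype.card_coe] using sum_mul_weightNormSq_le_sum_sq_zCommOp _ t _ fun χ hχ =>
    deltaMin_le_zEigval_sq o χ (by simpa only [Fintype.card_coe] using hχ)

end SubsetBounds

section Quantum

variable {N : ℕ}

lemma smul_commutator_zObservable_subsetPauliXYZ (o : Fin N → ℝ) (s : Finset (Fin N))
    (h : s → Fin 3) :
    Complex.I • (zObservable N o * subsetPauliXYZ N s h - subsetPauliXYZ N s h * zObservable N o)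
      = ∑ k : s, ((2 * zSign (h k) * o k : ℝ) : ℂ) •
          subsetPauliXYZ N s (update h k (zSwap (h k))) := by
  set e : Fin N → Fin 4 := fun q => if hq : q ∈ s then (h ⟨q, hq⟩).succ else 0 with he
  have he_mem : ∀ k : s, e k = (h k).succ := fun k => dif_pos k.2
  have he_update : ∀ k : s, update e k (zCommPartner (e k))
      = fun q => if hq : q ∈ s then (update h k (zSwap (h k)) ⟨q, hq⟩).succ else 0 := by
    intro k
    funext q
    by_cases hq : q ∈ s
    · by_cases hqk : q = k
      · obtain rfl : (⟨q, hq⟩ : s) = k := Subtype.ext hqk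
        simp [he_mem ⟨q, hq⟩, hq, zCommPartner_succ]
      · have hqk' : (⟨q, hq⟩ : s) ≠ k := fun h' => hqk (congrArg Subtype.val h')
        simp [update_of_ne hqk, update_of_ne hqk', he, hq]
    · have hqk : q ≠ k := fun h' => hq (h' ▸ k.2)
      simp [update_of_ne hqk, he, hq]
  have hexpand : Complex.I • (zObservable N o * subsetPauliXYZ N s h
      - subsetPauliXYZ N s h * zObservable N o)
      = ∑ k, (o k : ℂ) • (zCommSign (e k) • pauliString N (update e k (zCommPartner (e k)))) := by
    simp only [zObservable, subsetPauliXYZ, Matrix.sum_mul, Matrix.mul_sum, Matrix.smul_mul,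
      Matrix.mul_smul, ← sum_sub_distrib, ← smul_sub, smul_sum, ← he]
    exact sum_congr rfl fun k _ => by rw [smul_comm, smul_pauliString_z_commutator]
  rw [hexpand, ← sum_subset (subset_univ s) fun k _ hk => by simp [he, hk, zCommSign],
    ← sum_coe_sort s]
  refine sum_congr rfl fun k _ => ?_
  rw [he_update, smul_smul, he_mem, zCommSign_succ, subsetPauliXYZ]
  congr 1
  push_cast
  ring

lemma re_trace_smul_commutator_mul (o : Fin N → ℝ) (s : Finset (Fin N)) (h : s → Fin 3)
    (ρ : Matrix (Fin N → Fin 2) (Fin N → Fin 2) ℂ) :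
    ((Complex.I • (zObservable N o * subsetPauliXYZ N s h
        - subsetPauliXYZ N s h * zObservable N o)) * ρ).trace.re
      = 2 * zCommOp (fun k : s => o k)
          (fun p : s → Fin 3 => (subsetPauliXYZ N s p * ρ).trace.re) h := by
  rw [smul_commutator_zObservable_subsetPauliXYZ, Matrix.sum_mul, Matrix.trace_sum,
    Complex.re_sum, zCommOp, mul_sum]
  refine sum_congr rfl fun k _ => ?_
  rw [Matrix.smul_mul, Matrix.trace_smul, smul_eq_mul, Complex.re_ofReal_mul, zCommSite]
  ring

end Quantum

section QuadraticForms

variable {N m : ℕ} (Q : Finset (Finset (Fin N)))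
  (ρ : Fin m → Matrix (Fin N → Fin 2) (Fin N → Fin 2) ℂ)

noncomputable def pauliCoeff (x : Fin m → ℝ) (s : Finset (Fin N)) (p : s → Fin 3) : ℝ :=
  ∑ a, x a * (subsetPauliXYZ N s p * ρ a).trace.re

lemma asympQNTKxyz_eq_smul_gram (S : ℕ) (o : Fin N → ℝ) :
    asympQNTKxyz N S m o Q ρ = (1 / ((3 : ℝ) ^ S * Q.card)) • Matrix.of fun a b =>
      ∑ p ∈ Q.sigma fun s => (univ : Finset (s → Fin 3)),
        zCommOp (fun k : p.1 => o k) (fun q => (subsetPauliXYZ N p.1 q * ρ a).trace.re) p.2 *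
        zCommOp (fun k : p.1 => o k) (fun q => (subsetPauliXYZ N p.1 q * ρ b).trace.re) p.2 := by
  ext a b
  simp only [asympQNTKxyz, Matrix.smul_apply, of_apply, smul_eq_mul, sum_sigma,
    re_trace_smul_commutator_mul]
  congr 1
  exact sum_congr rfl fun _ _ => sum_congr rfl fun _ _ => by ring

lemma pauliGramW_eq_gram (w : ℕ) :
    pauliGramW N m Q w ρ = Matrix.of fun a b =>
      ∑ p ∈ Q.sigma fun s => (univ : Finset (s → Fin 3)),
        (if zWeight p.2 = w then (subsetPauliXYZ N p.1 p.2 * ρ a).trace.re else 0) *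
        (if zWeight p.2 = w then (subsetPauliXYZ N p.1 p.2 * ρ b).trace.re else 0) := by
  ext a b
  simp only [pauliGramW, of_apply, sum_sigma]
  refine sum_congr rfl fun _ _ => sum_congr rfl fun _ _ => ?_
  split_ifs <;> simp_all [zWeight]

lemma dotProduct_asympQNTKxyz_mulVec (S : ℕ) (o : Fin N → ℝ) (x : Fin m → ℝ) :
    x ⬝ᵥ asympQNTKxyz N S m o Q ρ *ᵥ x = 1 / ((3 : ℝ) ^ S * Q.card) *
      ∑ s ∈ Q, ∑ h, zCommOp (fun k : s => o k) (pauliCoeff ρ x s) h ^ 2 := by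
  rw [asympQNTKxyz_eq_smul_gram, smul_mulVec, dotProduct_smul, dotProduct_gram_mulVec,
    sum_sigma, smul_eq_mul]
  refine congrArg _ (sum_congr rfl fun s _ => sum_congr rfl fun h _ => ?_)
  exact congrArg (· ^ 2) (zCommOp_sum_mul univ (fun k : s => o k) x
    (fun a q => (subsetPauliXYZ N s q * ρ a).trace.re) h).symm

lemma dotProduct_pauliGramW_mulVec (w : ℕ) (x : Fin m → ℝ) :
    x ⬝ᵥ pauliGramW N m Q w ρ *ᵥ x = ∑ s ∈ Q, weightNormSq (pauliCoeff ρ x s) w := by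
  rw [pauliGramW_eq_gram, dotProduct_gram_mulVec, sum_sigma]
  refine sum_congr rfl fun s _ => sum_congr rfl fun p _ => ?_
  split_ifs <;> simp [dotProduct, pauliCoeff]

lemma asympQNTKxyz_isHermitian (S : ℕ) (o : Fin N → ℝ) :
    (asympQNTKxyz N S m o Q ρ).IsHermitian := by
  rw [asympQNTKxyz_eq_smul_gram]
  exact (gram_isHermitian _ _).smul (IsSelfAdjoint.all _)

lemma smul_sum_smul_pauliGramW_isHermitian (c : ℝ) (d : ℕ → ℝ) (S : ℕ) :
    (c • ∑ w ∈ range S, d w • pauliGramW N m Q w ρ).IsHermitian := by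
  refine IsHermitian.smul (isSelfAdjoint_sum _ fun w _ => ?_).isHermitian (IsSelfAdjoint.all _)
  rw [pauliGramW_eq_gram]
  exact ((gram_isHermitian _ _).smul (IsSelfAdjoint.all _)).isSelfAdjoint

lemma dotProduct_smul_sum_smul_pauliGramW_mulVec (c : ℝ) (d : ℕ → ℝ) (S : ℕ)
    (x : Fin m → ℝ) :
    x ⬝ᵥ (c • ∑ w ∈ range S, d w • pauliGramW N m Q w ρ) *ᵥ x
      = c * ∑ s ∈ Q, ∑ w ∈ range S, d w * weightNormSq (pauliCoeff ρ x s) w := by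
  simp only [smul_mulVec, sum_mulVec, dotProduct_smul, dotProduct_sum,
    dotProduct_pauliGramW_mulVec, smul_eq_mul, mul_sum]
  rw [sum_comm]

end QuadraticForms

theorem asympQNTKxyz_loewner_bounds_general (N S m : ℕ)
    (o : Fin N → ℝ) (Q : Finset (Finset (Fin N)))
    (hQcard : ∀ s ∈ Q, s.card = S)
    (ρ : Fin m → Matrix (Fin N → Fin 2) (Fin N → Fin 2) ℂ) :
    (((1 / ((3 : ℝ) ^ S * Q.card)) •
          ∑ w ∈ Finset.range S, ((∑ k, |o k|) ^ 2) • pauliGramW N m Q w ρ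
        - asympQNTKxyz N S m o Q ρ).PosSemidef)
    ∧ ((asympQNTKxyz N S m o Q ρ
        - (1 / ((3 : ℝ) ^ S * Q.card)) •
            ∑ w ∈ Finset.range S, deltaMin N o (S - w) • pauliGramW N m Q w ρ).PosSemidef) := by
  have hc : 0 ≤ 1 / ((3 : ℝ) ^ S * Q.card) := by positivity
  have hK := asympQNTKxyz_isHermitian Q ρ S o
  constructor
  · refine PosSemidef.of_dotProduct_mulVec_nonneg
      ((smul_sum_smul_pauliGramW_isHermitian Q ρ _ _ S).sub hK) fun x => ?_
    rw [star_trivial, sub_mulVec, dotProduct_sub, dotProduct_smul_sum_smul_pauliGramW_mulVec,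
      dotProduct_asympQNTKxyz_mulVec, ← mul_sub, ← sum_sub_distrib]
    refine mul_nonneg hc (sum_nonneg fun s hs => sub_nonneg.2 ?_)
    rw [← mul_sum, ← hQcard s hs]
    exact sum_sq_zCommOp_le_sq_sum_abs_mul o s _
  · refine PosSemidef.of_dotProduct_mulVec_nonneg
      (hK.sub (smul_sum_smul_pauliGramW_isHermitian Q ρ _ _ S)) fun x => ?_
    rw [star_trivial, sub_mulVec, dotProduct_sub, dotProduct_smul_sum_smul_pauliGramW_mulVec,
      dotProduct_asympQNTKxyz_mulVec, ← mul_sub, ← sum_sub_distrib]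
    refine mul_nonneg hc (sum_nonneg fun s hs => sub_nonneg.2 ?_)
    rw [← hQcard s hs]
    exact sum_deltaMin_mul_weightNormSq_le o s _

/-- **Loewner bounds for the asymptotic QNTK with `{X,Y,Z}^{⊗S}` gate Hamiltonians.**
For trace-one Hermitian states `ρ₁, …, ρ_m`,
`(1/(3^S|Q|))·Σ_w (Σ_k|o_k|)²·A_{Q,w}ᵀA_{Q,w} ≽ K_∞
   ≽ (1/(3^S|Q|))·Σ_w Δ_{S−w}·A_{Q,w}ᵀA_{Q,w}`. -/
theorem asympQNTKxyz_loewner_bounds (N S m : ℕ) (hS : 1 ≤ S) (hSN : S ≤ N)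
    (o : Fin N → ℝ) (Q : Finset (Finset (Fin N))) (hQ : Q.Nonempty)
    (hQcard : ∀ s ∈ Q, s.card = S)
    (ρ : Fin m → Matrix (Fin N → Fin 2) (Fin N → Fin 2) ℂ)
    (hherm : ∀ a, (ρ a).IsHermitian) (htr : ∀ a, (ρ a).trace = 1) :
    (((1 / ((3 : ℝ) ^ S * Q.card)) •
          ∑ w ∈ Finset.range S, ((∑ k, |o k|) ^ 2) • pauliGramW N m Q w ρ
        - asympQNTKxyz N S m o Q ρ).PosSemidef)
    ∧ ((asympQNTKxyz N S m o Q ρ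
        - (1 / ((3 : ℝ) ^ S * Q.card)) •
            ∑ w ∈ Finset.range S, deltaMin N o (S - w) • pauliGramW N m Q w ρ).PosSemidef) :=
  asympQNTKxyz_loewner_bounds_general N S m o Q hQcard ρ
end
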